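/- arXiv:2310.07877 — 4 statements merged into one kernel-verified Lean document; each statement's English description precedes it below -/
import Mathlib

section
/- Let (N, d_N) be a metric space and let v : ℝ × N → ℝ be a 1-Lipschitz function with respect to the product metric d((x,y),(x',y')) = sqrt((x-x')² + d_N(y,y')²). If there exists y₀ ∈ N such that v(x, y₀) = x for all x ∈ ℝ, then v(x, y) = x for all (x, y) ∈ ℝ × N. -/
/-- Tightness lemma: a 1-Lipschitz function (w.r.t. the Euclidean-type product
metric on `ℝ × N`) which equals `x` along `ℝ × {y₀}` equals `x` everywhere. -/
theorem stmt_0 {N : Type*} [MetricSpace N] (v : ℝ × N → ℝ)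
    (hLip : ∀ p q : ℝ × N,
      |v p - v q| ≤ Real.sqrt ((p.1 - q.1) ^ 2 + (dist p.2 q.2) ^ 2))
    (hy : ∃ y₀ : N, ∀ x : ℝ, v (x, y₀) = x) :
    ∀ x : ℝ, ∀ y : N, v (x, y) = x := by
  obtain ⟨y₀, h0⟩ := hy
  intro x y
  set c : ℝ := v (x, y) - x with hc
  set D : ℝ := dist y y₀ with hD
  have key : ∀ t : ℝ, c ^ 2 - 2 * c * t ≤ D ^ 2 := by
    intro t
    have h := hLip (x, y) (x + t, y₀)
    simp only [h0] at h
    have h1 : |c - t| ≤ Real.sqrt (t ^ 2 + D ^ 2) := by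
      have : (x - (x + t)) ^ 2 = t ^ 2 := by ring
      rw [this] at h
      have : v (x, y) - (x + t) = c - t := by rw [hc]; ring
      rwa [this] at h
    have h2 : (c - t) ^ 2 ≤ t ^ 2 + D ^ 2 := by
      have hnn : (0:ℝ) ≤ t ^ 2 + D ^ 2 := by positivity
      nlinarith [Real.sq_sqrt hnn, abs_nonneg (c - t), sq_abs (c - t),
        Real.sqrt_nonneg (t ^ 2 + D ^ 2)]
    nlinarith
  have hc0 : c = 0 := by
    by_contra h
    have hc2 : c ^ 2 > 0 := by positivity
    have := key ((c ^ 2 - D ^ 2 - 1) / (2 * c))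
    have h2c : (2 : ℝ) * c ≠ 0 := by
      simpa using h
    rw [mul_div_assoc'] at this
    field_simp at this
    nlinarith [this]
  linarith [hc0, hc.symm]
end

section
/- Let (N, d_N) be a metric space and v : ℝ × N → ℝ a 1-Lipschitz function (for the product metric) such that v(x,y) ≤ x for all (x,y), and write δ(y) := lim_{x → -∞} (x - v(x,y)) whenever this limit exists; suppose that δ(y₀) exists and is finite for some fixed y₀ ∈ N. Then δ(y) = δ(y₀) for every y ∈ N for which the limit exists. -/
open Filter

private lemma aux_le {N : Type*} [MetricSpace N] (v : ℝ × N → ℝ)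
    (hLip : ∀ p q : ℝ × N,
      |v p - v q| ≤ Real.sqrt ((p.1 - q.1) ^ 2 + (dist p.2 q.2) ^ 2))
    (y₀ y : N) (δ₀ δ : ℝ)
    (h₀ : Filter.Tendsto (fun x : ℝ => x - v (x, y₀)) Filter.atBot (nhds δ₀))
    (h : Filter.Tendsto (fun x : ℝ => x - v (x, y)) Filter.atBot (nhds δ)) :
    δ₀ ≤ δ := by
  set d : ℝ := dist y y₀ with hd
  have hd0 : 0 ≤ d := dist_nonneg
  have key : ∀ t : ℝ, 0 < t → δ₀ ≤ δ + d ^ 2 / (2 * t) := by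
    intro t ht
    have hmap : Tendsto (fun x : ℝ => x - t) atBot atBot :=
      tendsto_atBot_add_const_right _ (-t) tendsto_id
    have h₀' : Tendsto (fun x : ℝ => (x - t) - v (x - t, y₀)) atBot (nhds δ₀) :=
      h₀.comp hmap
    have h' : Tendsto (fun x : ℝ => (x - v (x, y)) + d ^ 2 / (2 * t)) atBot
        (nhds (δ + d ^ 2 / (2 * t))) := h.add_const _
    refine le_of_tendsto_of_tendsto' h₀' h' (fun x => ?_)
    have hb : |v (x, y) - v (x - t, y₀)| ≤ Real.sqrt (t ^ 2 + d ^ 2) := by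
      have := hLip (x, y) (x - t, y₀)
      simpa [sub_sub_cancel, ← hd] using this
    have hs : Real.sqrt (t ^ 2 + d ^ 2) ≤ t + d ^ 2 / (2 * t) := by
      have hnn : 0 ≤ t + d ^ 2 / (2 * t) := by positivity
      rw [show t + d ^ 2 / (2 * t) = Real.sqrt ((t + d ^ 2 / (2 * t)) ^ 2) from
        (Real.sqrt_sq hnn).symm]
      apply Real.sqrt_le_sqrt
      have ha : 2 * t * (d ^ 2 / (2 * t)) = d ^ 2 := by field_simp
      nlinarith [sq_nonneg (d ^ 2 / (2 * t))]
    have := (abs_le.mp hb).2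
    linarith
  refine le_of_forall_pos_le_add (fun ε hε => ?_)
  have ht : (0 : ℝ) < d ^ 2 / (2 * ε) + 1 := by positivity
  have hk := key _ ht
  have : d ^ 2 / (2 * (d ^ 2 / (2 * ε) + 1)) ≤ ε := by
    rw [div_le_iff₀ (by positivity)]
    have : ε * (2 * (d ^ 2 / (2 * ε) + 1)) = d ^ 2 + 2 * ε := by field_simp
    nlinarith
  linarith

/-- If `v` is 1-Lipschitz on `ℝ × N` (product metric), `v(x,y) ≤ x`, and the
limits `δ(y) = lim_{x → -∞} (x - v(x,y))` exist (finite) at `y₀` and at `y`,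
then the two limits coincide. -/
theorem stmt_1 {N : Type*} [MetricSpace N] (v : ℝ × N → ℝ)
    (hLip : ∀ p q : ℝ × N,
      |v p - v q| ≤ Real.sqrt ((p.1 - q.1) ^ 2 + (dist p.2 q.2) ^ 2))
    (hle : ∀ x : ℝ, ∀ y : N, v (x, y) ≤ x)
    (y₀ y : N) (δ₀ δ : ℝ)
    (h₀ : Filter.Tendsto (fun x : ℝ => x - v (x, y₀)) Filter.atBot (nhds δ₀))
    (h : Filter.Tendsto (fun x : ℝ => x - v (x, y)) Filter.atBot (nhds δ)) :
    δ = δ₀ := by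
  exact le_antisymm (aux_le v hLip y y₀ δ δ₀ h h₀) (aux_le v hLip y₀ y δ₀ δ h₀ h)
end

section
/- Let (M, d) be a metric space and u : M → ℝ. For x ∈ M and R > 0 define S⁺_{u,R}(x) = sup_{z : d(x,z) ≤ R} (u(z) - u(x))/R. Assume that for every x the function R ↦ S⁺_{u,R}(x) is nondecreasing, so that the limit S⁺_{u,∞}(x) = lim_{R→∞} S⁺_{u,R}(x) exists in (-∞, +∞]. Then S⁺_{u,∞}(x) = S⁺_{u,∞}(w) for all x, w ∈ M. -/
open Filter Topology

private lemma stmt_3_aux {M : Type*} [MetricSpace M] (u : M → ℝ) (S : M → ℝ → EReal)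
    (hS : ∀ x : M, ∀ R : ℝ, 0 < R →
      S x R = ⨆ z ∈ {z : M | dist x z ≤ R}, (((u z - u x) / R : ℝ) : EReal))
    (hmono : ∀ x : M, MonotoneOn (S x) (Set.Ioi (0 : ℝ)))
    (x w : M) :
    (⨆ R : {R : ℝ // 0 < R}, S x R) ≤ ⨆ R : {R : ℝ // 0 < R}, S w R := by
  set L := ⨆ R : {R : ℝ // 0 < R}, S w R with hLdef
  have hL0 : (0 : EReal) ≤ L := by
    have h1 : (((u w - u w) / 1 : ℝ) : EReal) ≤ S w 1 := by
      rw [hS w 1 one_pos]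
      exact le_iSup₂ (f := fun z (_ : z ∈ {z : M | dist w z ≤ 1}) =>
        (((u z - u w) / 1 : ℝ) : EReal)) w (by simp)
    have h2 : S w 1 ≤ L := le_iSup (fun R : {R : ℝ // 0 < R} => S w R) ⟨1, one_pos⟩
    refine le_trans ?_ (h1.trans h2)
    norm_num
  by_cases hLtop : L = ⊤
  · exact hLtop ▸ le_top
  have hLbot : L ≠ ⊥ := fun h => by simp [h] at hL0
  set c := L.toReal with hcdef
  have hc : (c : EReal) = L := EReal.coe_toReal hLtop hLbot
  have key : ∀ z : M, ∀ R' : ℝ, 0 < R' → dist w z ≤ R' → u z - u w ≤ c * R' := by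
    intro z R' hR' hz
    have h1 : (((u z - u w) / R' : ℝ) : EReal) ≤ S w R' := by
      rw [hS w R' hR']
      exact le_iSup₂ (f := fun z (_ : z ∈ {z : M | dist w z ≤ R'}) =>
        (((u z - u w) / R' : ℝ) : EReal)) z hz
    have h2 : S w R' ≤ L := le_iSup (fun R : {R : ℝ // 0 < R} => S w R) ⟨R', hR'⟩
    have h3 : ((u z - u w) / R' : ℝ) ≤ c := by
      exact_mod_cast h1.trans (h2.trans_eq hc.symm)
    rwa [div_le_iff₀ hR'] at h3
  refine iSup_le ?_
  rintro ⟨R, hR⟩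
  show S x R ≤ L
  have hub : ∀ R' : ℝ, R ≤ R' →
      S x R ≤ ((c + (c * dist w x + (u w - u x)) / R' : ℝ) : EReal) := by
    intro R' hRR'
    have hR' : 0 < R' := lt_of_lt_of_le hR hRR'
    have hm : S x R ≤ S x R' := hmono x hR hR' hRR'
    refine hm.trans ?_
    rw [hS x R' hR']
    refine iSup₂_le fun z hz => ?_
    have hz0 : dist x z ≤ R' := hz
    have hz' : dist w z ≤ dist w x + R' :=
      (dist_triangle w x z).trans (by linarith)
    have hk := key z (dist w x + R') (by positivity) hz'
    rw [mul_add] at hk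
    have h5 : (u z - u x) / R' ≤ c + (c * dist w x + (u w - u x)) / R' := by
      rw [div_le_iff₀ hR', add_mul, div_mul_cancel₀ _ (ne_of_gt hR')]
      linarith
    exact EReal.coe_le_coe_iff.mpr h5
  have htend : Tendsto (fun R' : ℝ => ((c + (c * dist w x + (u w - u x)) / R' : ℝ) : EReal))
      atTop (𝓝 (c : EReal)) := by
    have h1 : Tendsto (fun R' : ℝ => c + (c * dist w x + (u w - u x)) / R') atTop
        (𝓝 (c + 0)) :=
      tendsto_const_nhds.add (tendsto_const_nhds.div_atTop tendsto_id)
    rw [add_zero] at h1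
    exact (continuous_coe_real_ereal.tendsto c).comp h1
  have hfin : S x R ≤ (c : EReal) :=
    ge_of_tendsto htend (eventually_atTop.mpr ⟨R, hub⟩)
  exact hfin.trans_eq hc

/-- Location-independence of the asymptotic slope: if `R ↦ S⁺_{u,R}(x)` is
nondecreasing in `R > 0` for every `x`, then its limit as `R → ∞` (which, by
monotonicity, equals the supremum over `R > 0`) is the same at every point. -/
theorem stmt_3 {M : Type*} [MetricSpace M] (u : M → ℝ) (S : M → ℝ → EReal)
    (hS : ∀ x : M, ∀ R : ℝ, 0 < R →
      S x R = ⨆ z ∈ {z : M | dist x z ≤ R}, (((u z - u x) / R : ℝ) : EReal))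
    (hmono : ∀ x : M, MonotoneOn (S x) (Set.Ioi (0 : ℝ)))
    (x w : M) :
    (⨆ R : {R : ℝ // 0 < R}, S x R) = ⨆ R : {R : ℝ // 0 < R}, S w R :=
  le_antisymm (stmt_3_aux u S hS hmono x w) (stmt_3_aux u S hS hmono w x)
end

section
/- Let (N, d_N) be a metric space and v : ℝ × N → ℝ 1-Lipschitz (product metric). Fix y₀ ∈ N and suppose that v(λ, y₀) = λ for all λ ∈ ℝ. Then for all (x,y) ∈ ℝ × N and every λ ∈ ℝ, (v(x,y) − λ)² ≤ (x − λ)² + d_N(y,y₀)², and dividing by |λ| and letting λ → ±∞ yields v(x,y) = x. -/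
/-- Quantitative step of the tightness lemma: a 1-Lipschitz `v` on `ℝ × N`
(product metric) with `v(λ,y₀) = λ` for all `λ` satisfies
`(v(x,y) - λ)² ≤ (x - λ)² + d_N(y,y₀)²` for every `λ`, and hence
`v(x,y) = x` everywhere. -/
theorem stmt_17 {N : Type*} [MetricSpace N] (v : ℝ × N → ℝ)
    (hLip : ∀ p q : ℝ × N,
      |v p - v q| ≤ Real.sqrt ((p.1 - q.1) ^ 2 + (dist p.2 q.2) ^ 2))
    (y₀ : N) (hv : ∀ l : ℝ, v (l, y₀) = l) :
    (∀ l x : ℝ, ∀ y : N,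
      (v (x, y) - l) ^ 2 ≤ (x - l) ^ 2 + dist y y₀ ^ 2) ∧
    (∀ x : ℝ, ∀ y : N, v (x, y) = x) := by
  have key : ∀ l x : ℝ, ∀ y : N,
      (v (x, y) - l) ^ 2 ≤ (x - l) ^ 2 + dist y y₀ ^ 2 := by
    intro l x y
    have h := hLip (x, y) (l, y₀)
    rw [hv] at h
    have hnn : (0:ℝ) ≤ (x - l) ^ 2 + dist y y₀ ^ 2 := by positivity
    calc (v (x, y) - l) ^ 2 = |v (x, y) - l| ^ 2 := (sq_abs _).symm
      _ ≤ (Real.sqrt ((x - l) ^ 2 + dist y y₀ ^ 2)) ^ 2 := by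
          apply pow_le_pow_left₀ (abs_nonneg _) h
      _ = (x - l) ^ 2 + dist y y₀ ^ 2 := Real.sq_sqrt hnn
  refine ⟨key, fun x y => ?_⟩
  by_contra hne
  have h : ∀ l : ℝ, 2 * l * (x - v (x, y)) ≤
      x ^ 2 - v (x, y) ^ 2 + dist y y₀ ^ 2 := by
    intro l
    have := key l x y
    nlinarith [this]
  have hd : x - v (x, y) ≠ 0 := fun hc => hne (by linarith)
  set C := x ^ 2 - v (x, y) ^ 2 + dist y y₀ ^ 2 with hC
  have := h ((C + 1) / (2 * (x - v (x, y))))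
  have heq : 2 * ((C + 1) / (2 * (x - v (x, y)))) * (x - v (x, y)) = C + 1 := by
    field_simp
  linarith
end
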